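/- arXiv:1707.03901 — 3 statements merged into one kernel-verified Lean document; each statement's English description precedes it below -/
import Mathlib

section
/- If A, B in SL₂(ℝ) satisfy tr(ABA⁻¹B⁻¹) = −2, then setting X = tr A, Y = tr B, Z = tr(AB), the triple (X,Y,Z) satisfies X² + Y² + Z² = XYZ. -/
/-! Fricke's trace identity `tr [A, B] = x² + y² + z² - x y z - 2` for `A, B ∈ SL₂`, with
`x = tr A`, `y = tr B`, `z = tr AB`, turns `tr [A, B] = -2` into the Markov equation. -/

namespace Matrix.SpecialLinearGroup

theorem trace_commutator_fin_two {R : Type*} [CommRing R]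
    (A B : SpecialLinearGroup (Fin 2) R) :
    trace ((A * B * A⁻¹ * B⁻¹ : SpecialLinearGroup (Fin 2) R) : Matrix (Fin 2) (Fin 2) R) =
      trace (A : Matrix (Fin 2) (Fin 2) R) ^ 2 + trace (B : Matrix (Fin 2) (Fin 2) R) ^ 2 +
        trace ((A * B : SpecialLinearGroup (Fin 2) R) : Matrix (Fin 2) (Fin 2) R) ^ 2 -
        trace (A : Matrix (Fin 2) (Fin 2) R) * trace (B : Matrix (Fin 2) (Fin 2) R) *
          trace ((A * B : SpecialLinearGroup (Fin 2) R) : Matrix (Fin 2) (Fin 2) R) - 2 := by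
  have hA : A 0 0 * A 1 1 - A 0 1 * A 1 0 = 1 := by rw [← det_fin_two]; exact A.2
  have hB : B 0 0 * B 1 1 - B 0 1 * B 1 0 = 1 := by rw [← det_fin_two]; exact B.2
  simp only [coe_mul, coe_inv, adjugate_fin_two, trace_fin_two, mul_apply, Fin.sum_univ_two,
    of_apply, cons_val', cons_val_zero, cons_val_one, empty_val', cons_val_fin_one]
  linear_combination ((B 0 0 + B 1 1) ^ 2 - 2) * hA +
    (A 0 0 ^ 2 + A 1 1 ^ 2 + 2 * A 0 1 * A 1 0) * hB

end Matrix.SpecialLinearGroup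

theorem punctured_torus_markov_surface (A B : Matrix.SpecialLinearGroup (Fin 2) ℝ)
    (h : Matrix.trace ((A * B * A⁻¹ * B⁻¹ : Matrix.SpecialLinearGroup (Fin 2) ℝ) : Matrix (Fin 2) (Fin 2) ℝ) = -2) :
    (Matrix.trace (A : Matrix (Fin 2) (Fin 2) ℝ))^2 +
    (Matrix.trace (B : Matrix (Fin 2) (Fin 2) ℝ))^2 +
    (Matrix.trace ((A * B : Matrix.SpecialLinearGroup (Fin 2) ℝ) : Matrix (Fin 2) (Fin 2) ℝ))^2 =
      Matrix.trace (A : Matrix (Fin 2) (Fin 2) ℝ) *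
      Matrix.trace (B : Matrix (Fin 2) (Fin 2) ℝ) *
      Matrix.trace ((A * B : Matrix.SpecialLinearGroup (Fin 2) ℝ) : Matrix (Fin 2) (Fin 2) ℝ) := by
  linear_combination h - Matrix.SpecialLinearGroup.trace_commutator_fin_two A B
end

section
/- For every natural number a ≥ 1, the matrices A_a = [[1−a+a², a²],[a, a+1]] and B_a = [[1−2a+4a², 4a²],[2a, 2a+1]] lie in SL₂(ℤ) and the trace of the commutator A_a B_a A_a⁻¹ B_a⁻¹ equals 2 − 4a⁶. -/
namespace Matrix

variable {n R : Type*} [Fintype n] [DecidableEq n] [CommRing R]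

theorem inv_eq_adjugate_of_det_eq_one {A : Matrix n n R} (hA : A.det = 1) : A⁻¹ = A.adjugate := by
  rw [inv_def, hA, Ring.inverse_one, one_smul]

/-- Fricke's trace identity. -/
theorem trace_mul_mul_inv_mul_inv_fin_two {A B : Matrix (Fin 2) (Fin 2) R}
    (hA : A.det = 1) (hB : B.det = 1) :
    trace (A * B * A⁻¹ * B⁻¹) =
      trace A ^ 2 + trace B ^ 2 + trace (A * B) ^ 2 - trace A * trace B * trace (A * B) - 2 := by
  rw [inv_eq_adjugate_of_det_eq_one hA, inv_eq_adjugate_of_det_eq_one hB]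
  rw [eta_fin_two A, eta_fin_two B] at *
  simp only [det_fin_two_of] at hA hB
  simp only [adjugate_fin_two_of, mul_fin_two, trace_fin_two_of]
  -- For arbitrary determinants the left side is
  -- `det B * tr A ^ 2 + det A * tr B ^ 2 + tr (A * B) ^ 2 - tr A * tr B * tr (A * B) - 2 * det A * det B`.
  linear_combination ((B 0 0 + B 1 1) ^ 2 - 2 * (B 0 0 * B 1 1 - B 0 1 * B 1 0)) * hA +
    ((A 0 0 + A 1 1) ^ 2 - 2) * hB

end Matrix

theorem generalized_matrices_commutator_general (a : ℕ) :
    ((!![1 - (a:ℤ) + a^2, a^2; a, a + 1]) : Matrix (Fin 2) (Fin 2) ℤ).det = 1 ∧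
    ((!![1 - 2*(a:ℤ) + 4*a^2, 4*a^2; 2*a, 2*a + 1]) : Matrix (Fin 2) (Fin 2) ℤ).det = 1 ∧
    Matrix.trace
      (((!![1 - (a:ℤ) + a^2, a^2; a, a + 1]) : Matrix (Fin 2) (Fin 2) ℤ) *
       ((!![1 - 2*(a:ℤ) + 4*a^2, 4*a^2; 2*a, 2*a + 1]) : Matrix (Fin 2) (Fin 2) ℤ) *
       ((!![1 - (a:ℤ) + a^2, a^2; a, a + 1]) : Matrix (Fin 2) (Fin 2) ℤ)⁻¹ *
       ((!![1 - 2*(a:ℤ) + 4*a^2, 4*a^2; 2*a, 2*a + 1]) : Matrix (Fin 2) (Fin 2) ℤ)⁻¹)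
      = 2 - 4*(a:ℤ)^6 := by
  have hA : ((!![1 - (a:ℤ) + a^2, a^2; a, a + 1]) : Matrix (Fin 2) (Fin 2) ℤ).det = 1 := by
    rw [Matrix.det_fin_two_of]; ring
  have hB : ((!![1 - 2*(a:ℤ) + 4*a^2, 4*a^2; 2*a, 2*a + 1]) : Matrix (Fin 2) (Fin 2) ℤ).det = 1 := by
    rw [Matrix.det_fin_two_of]; ring
  refine ⟨hA, hB, ?_⟩
  rw [Matrix.trace_mul_mul_inv_mul_inv_fin_two hA hB]
  simp only [Matrix.mul_fin_two, Matrix.trace_fin_two_of]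
  ring

theorem generalized_matrices_commutator (a : ℕ) (ha : 1 ≤ a) :
    ((!![1 - (a:ℤ) + a^2, a^2; a, a + 1]) : Matrix (Fin 2) (Fin 2) ℤ).det = 1 ∧
    ((!![1 - 2*(a:ℤ) + 4*a^2, 4*a^2; 2*a, 2*a + 1]) : Matrix (Fin 2) (Fin 2) ℤ).det = 1 ∧
    Matrix.trace
      (((!![1 - (a:ℤ) + a^2, a^2; a, a + 1]) : Matrix (Fin 2) (Fin 2) ℤ) *
       ((!![1 - 2*(a:ℤ) + 4*a^2, 4*a^2; 2*a, 2*a + 1]) : Matrix (Fin 2) (Fin 2) ℤ) *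
       ((!![1 - (a:ℤ) + a^2, a^2; a, a + 1]) : Matrix (Fin 2) (Fin 2) ℤ)⁻¹ *
       ((!![1 - 2*(a:ℤ) + 4*a^2, 4*a^2; 2*a, 2*a + 1]) : Matrix (Fin 2) (Fin 2) ℤ)⁻¹)
      = 2 - 4*(a:ℤ)^6 :=
  generalized_matrices_commutator_general a
end

section
/- Let ‖·‖ be a norm on ℝ² and ψ(x) = ‖(x,1)‖. If ‖·‖ is differentiable (as a function ℝ²\{0} → ℝ) at the point (x₀, 1), then ψ is differentiable at x₀; conversely, if ψ is differentiable at x₀ then ‖·‖ is differentiable at (x₀, 1). -/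
/-! On the open half-plane `t > 0` a positively homogeneous `N` coincides with its
dehomogenisation `(x, t) ↦ t • N (t⁻¹ • x, 1)`, a composition of the slice `x ↦ N (x, 1)` with
maps that are smooth there; conversely the slice is the composition of `N` with `x ↦ (x, 1)`. -/

open Topology

section PositivelyHomogeneous

variable {E F : Type*} [NormedAddCommGroup E] [NormedSpace ℝ E]
  [NormedAddCommGroup F] [NormedSpace ℝ F] {N : E × ℝ → F}

theorem eq_smul_slice_of_pos (hN : ∀ c : ℝ, 0 < c → ∀ v, N (c • v) = c • N v)
    {p : E × ℝ} (hp : 0 < p.2) : N p = p.2 • N (p.2⁻¹ • p.1, 1) := by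
  rw [← hN _ hp]
  congr
  ext <;> simp [hp.ne']

theorem smul_slice_eventuallyEq (hN : ∀ c : ℝ, 0 < c → ∀ v, N (c • v) = c • N v) (x₀ : E) :
    (fun p : E × ℝ => p.2 • N (p.2⁻¹ • p.1, 1)) =ᶠ[𝓝 (x₀, 1)] N := by
  filter_upwards [continuous_snd.tendsto (x₀, (1 : ℝ)) (Ioi_mem_nhds one_pos)] with p hp
  exact (eq_smul_slice_of_pos hN hp).symm

theorem differentiableAt_iff_differentiableAt_slice
    (hN : ∀ c : ℝ, 0 < c → ∀ v, N (c • v) = c • N v) (x₀ : E) :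
    DifferentiableAt ℝ N (x₀, 1) ↔ DifferentiableAt ℝ (fun x => N (x, 1)) x₀ := by
  refine ⟨fun h => h.comp x₀ (differentiableAt_id.prodMk (differentiableAt_const 1)),
    fun h => (smul_slice_eventuallyEq hN x₀).differentiableAt_iff.mp ?_⟩
  have hdehom : DifferentiableAt ℝ (fun p : E × ℝ => p.2⁻¹ • p.1) (x₀, 1) := by
    fun_prop (disch := norm_num)
  have hslice : DifferentiableAt ℝ (fun x => N (x, 1)) ((1 : ℝ)⁻¹ • x₀) := by simpa using h
  have hcomp : DifferentiableAt ℝ (fun p : E × ℝ => N (p.2⁻¹ • p.1, 1)) (x₀, 1) :=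
    DifferentiableAt.comp (g := fun x => N (x, 1)) (x₀, 1) hslice hdehom
  exact differentiableAt_snd.smul hcomp

end PositivelyHomogeneous

theorem fock_differentiable_iff_general (N : ℝ × ℝ → ℝ)
    (hhom : ∀ (c : ℝ) (v), N (c • v) = |c| * N v)
    (x₀ : ℝ) :
    DifferentiableAt ℝ N (x₀, 1) ↔ DifferentiableAt ℝ (fun x : ℝ => N (x, 1)) x₀ :=
  differentiableAt_iff_differentiableAt_slice
    (fun c hc v => by rw [hhom, abs_of_pos hc, smul_eq_mul]) x₀

theorem fock_differentiable_iff (N : ℝ × ℝ → ℝ)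
    (hzero : ∀ v, N v = 0 ↔ v = 0)
    (hhom : ∀ (c : ℝ) (v), N (c • v) = |c| * N v)
    (htri : ∀ v w, N (v + w) ≤ N v + N w)
    (x₀ : ℝ) :
    DifferentiableAt ℝ N (x₀, 1) ↔ DifferentiableAt ℝ (fun x : ℝ => N (x, 1)) x₀ :=
  fock_differentiable_iff_general N hhom x₀
end
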